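/- Every finite congestion game (with Rosenthal payoff structure) has the finite improvement property: every sequence of asynchronous strict improvement steps is finite and terminates at a pure strategy Nash equilibrium, which is a local optimum of Rosenthal's potential function. -/
import Mathlib


open scoped Classical

/-- Number of users of resource `r` under strategy profile `σ` in a classical congestion game. -/
noncomputable def nUsers {N : ℕ} {R : Type*} [Fintype R]
    (σ : Fin N → Finset R) (r : R) : ℕ :=
  (Finset.univ.filter (fun i => r ∈ σ i)).card

/-- Player `i`'s total payoff. -/
noncomputable def cgPayoff {N : ℕ} {R : Type*} [Fintype R]
    (g : R → ℕ → ℤ) (σ : Fin N → Finset R) (i : Fin N) : ℤ :=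
  ∑ r ∈ σ i, g r (nUsers σ r)

/-- Rosenthal's potential function. -/
noncomputable def rosenthal {N : ℕ} {R : Type*} [Fintype R]
    (g : R → ℕ → ℤ) (σ : Fin N → Finset R) : ℤ :=
  ∑ r : R, ∑ k ∈ Finset.Icc 1 (nUsers σ r), g r k

/-- A strict improvement step: one player unilaterally changes its strategy and strictly
increases its own payoff. -/
def Improves {N : ℕ} {R : Type*} [Fintype R]
    (g : R → ℕ → ℤ) (σ σ' : Fin N → Finset R) : Prop :=
  ∃ i : Fin N, (∀ j, j ≠ i → σ' j = σ j) ∧ cgPayoff g σ i < cgPayoff g σ' i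

lemma nUsers_split {N : ℕ} {R : Type*} [Fintype R]
    (σ : Fin N → Finset R) (i : Fin N) (r : R) :
    nUsers σ r = ((Finset.univ.erase i).filter (fun j => r ∈ σ j)).card
      + (if r ∈ σ i then 1 else 0) := by
  unfold nUsers
  nth_rewrite 1 [← Finset.insert_erase (Finset.mem_univ i)]
  rw [Finset.filter_insert]
  split
  · rw [Finset.card_insert_of_notMem (by simp)]
  · simp

lemma pot_diff {N : ℕ} {R : Type*} [Fintype R] (g : R → ℕ → ℤ)
    (σ σ' : Fin N → Finset R) (i : Fin N) (hj : ∀ j, j ≠ i → σ' j = σ j) :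
    rosenthal g σ' - rosenthal g σ = cgPayoff g σ' i - cgPayoff g σ i := by
  have hfilt : ∀ r : R, ((Finset.univ.erase i).filter (fun j => r ∈ σ' j))
      = ((Finset.univ.erase i).filter (fun j => r ∈ σ j)) := by
    intro r
    apply Finset.filter_congr
    intro j hjmem
    rw [hj j (Finset.ne_of_mem_erase hjmem)]
  have key : ∀ r : R,
      (∑ k ∈ Finset.Icc 1 (nUsers σ' r), g r k) - (∑ k ∈ Finset.Icc 1 (nUsers σ r), g r k)
      = (if r ∈ σ' i then g r (nUsers σ' r) else 0)
        - (if r ∈ σ i then g r (nUsers σ r) else 0) := by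
    intro r
    set m := ((Finset.univ.erase i).filter (fun j => r ∈ σ j)).card with hm
    have h1 : nUsers σ r = m + (if r ∈ σ i then 1 else 0) := nUsers_split σ i r
    have h2 : nUsers σ' r = m + (if r ∈ σ' i then 1 else 0) := by
      rw [nUsers_split σ' i r, hfilt r]
    by_cases hσ : r ∈ σ i <;> by_cases hσ' : r ∈ σ' i <;>
      simp only [hσ, hσ', if_true, if_false] at h1 h2 ⊢ <;>
      rw [h1, h2]
    · ring
    · rw [Finset.sum_Icc_succ_top (Nat.succ_le_succ (Nat.zero_le m))]
      ring
    · rw [Finset.sum_Icc_succ_top (Nat.succ_le_succ (Nat.zero_le m))]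
      ring
    · ring
  have hpay : ∀ (τ : Fin N → Finset R),
      cgPayoff g τ i = ∑ r : R, (if r ∈ τ i then g r (nUsers τ r) else 0) := by
    intro τ
    rw [cgPayoff, ← Finset.sum_filter]
    congr 1
    ext r
    simp
  rw [rosenthal, rosenthal, ← Finset.sum_sub_distrib, hpay, hpay, ← Finset.sum_sub_distrib]
  exact Finset.sum_congr rfl fun r _ => key r

/-- Every finite congestion game has the finite improvement property: there is no infinite
sequence of asynchronous strict improvement steps (within the strategy spaces `Strat`), and
any profile admitting no improvement step is a pure Nash equilibrium which is a local
optimum of Rosenthal's potential function. -/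
theorem congestion_game_FIP {N : ℕ} {R : Type*} [Fintype R]
    (g : R → ℕ → ℤ) (Strat : Fin N → Set (Finset R)) :
    (¬ ∃ f : ℕ → (Fin N → Finset R),
        (∀ n j, f n j ∈ Strat j) ∧ ∀ n, Improves g (f n) (f (n + 1))) ∧
    (∀ σ : Fin N → Finset R, (∀ j, σ j ∈ Strat j) →
      (¬ ∃ σ' : Fin N → Finset R, (∀ j, σ' j ∈ Strat j) ∧ Improves g σ σ') →
      ((∀ i : Fin N, ∀ s ∈ Strat i, cgPayoff g (Function.update σ i s) i ≤ cgPayoff g σ i) ∧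
       (∀ i : Fin N, ∀ s ∈ Strat i, rosenthal g (Function.update σ i s) ≤ rosenthal g σ))) := by
  have inc : ∀ σ σ' : Fin N → Finset R, Improves g σ σ' → rosenthal g σ < rosenthal g σ' := by
    intro σ σ' ⟨i, hj, hlt⟩
    have := pot_diff g σ σ' i hj
    omega
  constructor
  · rintro ⟨f, -, himp⟩
    have hmono : StrictMono (fun n => rosenthal g (f n)) :=
      strictMono_nat_of_lt_succ fun n => inc _ _ (himp n)
    have hinf : (Set.range (fun n => rosenthal g (f n))).Infinite :=
      Set.infinite_range_of_injective hmono.injective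
    have hfin : (Set.range (rosenthal g : (Fin N → Finset R) → ℤ)).Finite :=
      Set.finite_range _
    exact hinf (hfin.subset (by rintro _ ⟨n, rfl⟩; exact ⟨f n, rfl⟩))
  · intro σ hσ hno
    have main : ∀ i : Fin N, ∀ s ∈ Strat i,
        cgPayoff g (Function.update σ i s) i ≤ cgPayoff g σ i := by
      intro i s hs
      by_contra h
      push_neg at h
      exact hno ⟨Function.update σ i s,
        fun j => by
          by_cases hji : j = i
          · subst hji; simpa using hs
          · rw [Function.update_of_ne hji]; exact hσ j,
        i, fun j hji => Function.update_of_ne hji _ _, h⟩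
    refine ⟨main, fun i s hs => ?_⟩
    have := pot_diff g σ (Function.update σ i s) i
      (fun j hji => Function.update_of_ne hji _ _)
    have := main i s hs
    omega
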